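/- The set of convergent sequences in G is negligible for the infinite product of Haar measures: the set of sequences x : ℕ → G for which there exists L ∈ G with x(n) → L as n → ∞ is contained in a measurable set of measure zero with respect to the product measure on G^ℕ given by an independent copy of the Haar probability measure at each index. -/

import Mathlib

/-!
Every point of `G` has an open neighbourhood `U` with `μ₀ U < 1`: separate it from another
point by disjoint open sets, the second of which has positive Haar measure. By compactness
finitely many such `U` cover `G`, and a convergent sequence eventually stays in one of them.
For a fixed `U` and `N`, the sequences with `x n ∈ U` for all `n ≥ N` have measure at most
`μ₀ U ^ k` for every `k`, hence measure zero.
-/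

open MeasureTheory Filter Set

section

variable {X : Type*} [MeasurableSpace X]

def IsInfiniteProduct (ν : Measure (ℕ → X)) (μ : Measure X) : Prop :=
  ∀ (s : Finset ℕ) (B : ℕ → Set X), (∀ i ∈ s, MeasurableSet (B i)) →
    ν {x | ∀ i ∈ s, x i ∈ B i} = ∏ i ∈ s, μ (B i)

theorem measurableSet_setOf_eventually_mem {U : Set X} (hU : MeasurableSet U) :
    MeasurableSet {x : ℕ → X | ∀ᶠ n in atTop, x n ∈ U} := by
  have h_eq : {x : ℕ → X | ∀ᶠ n in atTop, x n ∈ U} = ⋃ N, ⋂ n ≥ N, (fun x => x n) ⁻¹' U := by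
    ext x
    simp only [mem_ofPred_eq, eventually_atTop, mem_iUnion, mem_iInter, mem_preimage]
  rw [h_eq]
  exact .iUnion fun N => .iInter fun n => .iInter fun _ => measurable_pi_apply n hU

namespace IsInfiniteProduct

variable {ν : Measure (ℕ → X)} {μ : Measure X}

theorem measure_forall_ge_mem_le_pow (hν : IsInfiniteProduct ν μ) {U : Set X}
    (hU : MeasurableSet U) (N k : ℕ) : ν {x | ∀ n ≥ N, x n ∈ U} ≤ μ U ^ k :=
  calc ν {x | ∀ n ≥ N, x n ∈ U}
      ≤ ν {x | ∀ i ∈ Finset.Ico N (N + k), x i ∈ U} :=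
        measure_mono fun x hx i hi => hx i (Finset.mem_Ico.1 hi).1
    _ = μ U ^ k := by
        rw [hν _ _ fun _ _ => hU, Finset.prod_const, Nat.card_Ico, Nat.add_sub_cancel_left]

theorem measure_setOf_eventually_mem (hν : IsInfiniteProduct ν μ) {U : Set X}
    (hU : MeasurableSet U) (hμU : μ U < 1) : ν {x | ∀ᶠ n in atTop, x n ∈ U} = 0 := by
  simp only [eventually_atTop, ofPred_exists]
  refine measure_iUnion_null fun N => nonpos_iff_eq_zero.1 ?_
  exact ge_of_tendsto' (ENNReal.tendsto_pow_atTop_nhds_zero_of_lt_one hμU)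
    (hν.measure_forall_ge_mem_le_pow hU N)

end IsInfiniteProduct

theorem exists_isOpen_mem_measure_lt_one [TopologicalSpace X] [T2Space X] [Nontrivial X]
    [OpensMeasurableSpace X] (μ : Measure X) [IsProbabilityMeasure μ] [μ.IsOpenPosMeasure]
    (x : X) : ∃ U, IsOpen U ∧ x ∈ U ∧ μ U < 1 := by
  obtain ⟨y, hyx⟩ := exists_ne x
  obtain ⟨U, V, hU, hV, hxU, hyV, hUV⟩ := t2_separation hyx.symm
  refine ⟨U, hU, hxU, ?_⟩
  calc μ U ≤ μ Vᶜ := measure_mono hUV.subset_compl_right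
    _ = 1 - μ V := prob_compl_eq_one_sub hV.measurableSet
    _ < 1 := ENNReal.sub_lt_self ENNReal.one_ne_top one_ne_zero
        (hV.measure_ne_zero μ ⟨y, hyV⟩)

end

theorem convergent_sequences_contained_in_null_general {G : Type*} [Group G]
    [TopologicalSpace G] [CompactSpace G] [T2Space G]
    [Nontrivial G] [MeasurableSpace G] [BorelSpace G]
    (μ₀ : Measure G) [μ₀.IsHaarMeasure] [IsProbabilityMeasure μ₀]
    (ν : Measure (ℕ → G))
    (hν : ∀ (s : Finset ℕ) (B : ℕ → Set G),
      (∀ i ∈ s, MeasurableSet (B i)) →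
      ν {x : ℕ → G | ∀ i ∈ s, x i ∈ B i} = ∏ i ∈ s, μ₀ (B i)) :
    ∃ N : Set (ℕ → G), MeasurableSet N ∧ ν N = 0 ∧
      {x : ℕ → G | ∃ L : G, Filter.Tendsto x Filter.atTop (nhds L)} ⊆ N := by
  choose U hU_open hgU hμU using exists_isOpen_mem_measure_lt_one μ₀
  obtain ⟨t, ht⟩ := isCompact_univ.elim_finite_subcover U hU_open
    fun g _ => mem_iUnion.2 ⟨g, hgU g⟩
  refine ⟨⋃ g ∈ t, {x | ∀ᶠ n in atTop, x n ∈ U g}, ?_, ?_, ?_⟩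
  · exact .biUnion t.countable_toSet fun g _ =>
      measurableSet_setOf_eventually_mem (hU_open g).measurableSet
  · exact (measure_biUnion_null_iff t.countable_toSet).2 fun g _ =>
      IsInfiniteProduct.measure_setOf_eventually_mem hν (hU_open g).measurableSet (hμU g)
  · rintro x ⟨L, hL⟩
    obtain ⟨g, hg, hLg⟩ := mem_iUnion₂.1 (ht (mem_univ L))
    exact mem_biUnion hg (hL ((hU_open g).mem_nhds hLg))

/-- The set of convergent sequences in `G` is negligible for the infinite
product of Haar measures: if `G` is a compact Hausdorff second countable
topological group with more than one element, `μ₀` its normalized Haar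
probability measure, and `ν` the infinite product measure on `G^ℕ` (an
independent copy of `μ₀` at each index, characterized by its values on cylinder
sets), then the set of sequences `x : ℕ → G` for which there exists `L ∈ G`
with `x n → L` is contained in a measurable set of `ν`-measure zero. -/
theorem convergent_sequences_contained_in_null {G : Type*} [Group G]
    [TopologicalSpace G] [IsTopologicalGroup G] [CompactSpace G] [T2Space G]
    [SecondCountableTopology G] [Nontrivial G] [MeasurableSpace G] [BorelSpace G]
    (μ₀ : Measure G) [μ₀.IsHaarMeasure] [IsProbabilityMeasure μ₀]
    (ν : Measure (ℕ → G))
    (hν : ∀ (s : Finset ℕ) (B : ℕ → Set G),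
      (∀ i ∈ s, MeasurableSet (B i)) →
      ν {x : ℕ → G | ∀ i ∈ s, x i ∈ B i} = ∏ i ∈ s, μ₀ (B i)) :
    ∃ N : Set (ℕ → G), MeasurableSet N ∧ ν N = 0 ∧
      {x : ℕ → G | ∃ L : G, Filter.Tendsto x Filter.atTop (nhds L)} ⊆ N :=
  convergent_sequences_contained_in_null_general μ₀ ν hν
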